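/- Let ≤ be a linear order on a nonempty set X. Then 𝓔* := {E ⊆ X × X : Δ_X ⊆ E and E ⊆ E_φ for some φ ∈ Φ} is a coarse structure on X with base {E_φ : φ ∈ Φ}; every ball E_φ[x] = φ(x) is convex; and the bounded subsets of (X, 𝓔*) are exactly the members of 𝓑_≤. -/
import Mathlib


open Set

variable {X : Type*}

/-- The ball `E[x] = {y | (x,y) ∈ E}`. -/
def Ball (E : Set (X × X)) (x : X) : Set X := {y | (x, y) ∈ E}

/-- `E[A] = ⋃ a ∈ A, E[a]`. -/
def BallSet (E : Set (X × X)) (A : Set X) : Set X := ⋃ a ∈ A, Ball E a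

/-- Composition of entourages: `E ∘ F = {(x,y) | ∃ z, (x,z) ∈ E ∧ (z,y) ∈ F}`. -/
def Comp (E F : Set (X × X)) : Set (X × X) := {p | ∃ z, (p.1, z) ∈ E ∧ (z, p.2) ∈ F}

/-- Inverse entourage `E⁻¹`. -/
def EInv (E : Set (X × X)) : Set (X × X) := {p | (p.2, p.1) ∈ E}

/-- `𝓔` is a coarse structure on `X`. -/
def IsCoarse (𝓔 : Set (Set (X × X))) : Prop :=
  (∀ E ∈ 𝓔, ∀ x : X, (x, x) ∈ E) ∧
  (∀ E ∈ 𝓔, ∀ F ∈ 𝓔, Comp E F ∈ 𝓔) ∧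
  (∀ E ∈ 𝓔, EInv E ∈ 𝓔) ∧
  (∀ E ∈ 𝓔, ∀ E' : Set (X × X), (∀ x : X, (x, x) ∈ E') → E' ⊆ E → E' ∈ 𝓔)

/-- A subset of a linearly ordered set is convex. -/
def IsConvexSet [LinearOrder X] (Y : Set X) : Prop :=
  ∀ a ∈ Y, ∀ b ∈ Y, ∀ c : X, a ≤ c → c ≤ b → c ∈ Y

/-- The linear order `≤` is compatible with the coarse structure `𝓔`. -/
def Compatible [LinearOrder X] (𝓔 : Set (Set (X × X))) : Prop :=
  ∀ E ∈ 𝓔, ∃ F ∈ 𝓔, ∀ x y : X, x < y → y ∉ Ball F x → ∀ x' ∈ Ball E x, x' < y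

/-- The coarse space `(X, 𝓔)` is connected. -/
def CoarseConnected (𝓔 : Set (Set (X × X))) : Prop :=
  ∀ x y : X, ∃ E ∈ 𝓔, (x, y) ∈ E

/-- `B` is a bounded subset of the coarse space `(X, 𝓔)`. -/
def IsBoundedIn (𝓔 : Set (Set (X × X))) (B : Set X) : Prop :=
  B = ∅ ∨ ∃ E ∈ 𝓔, ∃ x : X, B ⊆ Ball E x

/-- `a` is a right `E`-end of `A`. -/
def RightEnd [LinearOrder X] (E : Set (X × X)) (A : Set X) (a : X) : Prop :=
  a ∈ A ∧ ∀ x ∈ A, x ∉ Ball E a → x < a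

/-- The interval bornology of a linear order. -/
def IB (X : Type*) [LinearOrder X] : Set (Set X) :=
  {B | B = ∅ ∨ ∃ a b : X, B ⊆ Icc a b}

/-- The family of bounded convex subsets of a linearly ordered set. -/
def ConvB (X : Type*) [LinearOrder X] : Set (Set X) :=
  {C | IsConvexSet C ∧ ∃ a b : X, C ⊆ Icc a b}

/-- The family `Φ` of Example 2. -/
def Phi (X : Type*) [LinearOrder X] : Set (X → Set X) :=
  {φ | (∀ x : X, φ x ∈ ConvB X) ∧ (∀ x : X, x ∈ φ x) ∧
    ∀ a b : X, (⋃ x ∈ Icc a b, φ x) ∈ IB X ∧ {x : X | (φ x ∩ Icc a b).Nonempty} ∈ IB X}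

/-- The entourage `E_φ` associated with `φ : X → Set X`. -/
def EPhi (φ : X → Set X) : Set (X × X) := {p | p.2 ∈ φ p.1}

/-- `compPow E n = Eⁿ` for `n ≥ 1` (the value at `0` is junk): `E¹ = E`, `E^{n+1} = E ∘ Eⁿ`. -/
def compPow (E : Set (X × X)) : ℕ → Set (X × X)
  | 0 => E
  | 1 => E
  | (n + 2) => Comp E (compPow E (n + 1))


section Aux
variable [LinearOrder X]

/-- Order-convex hull. -/
def hullS (S : Set X) : Set X := {c | ∃ p ∈ S, ∃ q ∈ S, p ≤ c ∧ c ≤ q}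

lemma subset_hullS (S : Set X) : S ⊆ hullS S :=
  fun c hc => ⟨c, hc, c, hc, le_refl c, le_refl c⟩

lemma hullS_convex (S : Set X) : IsConvexSet (hullS S) := by
  rintro u ⟨p, hp, _, _, hpu, _⟩ v ⟨_, _, q, hq, _, hvq⟩ c huc hcv
  exact ⟨p, hp, q, hq, hpu.trans huc, hcv.trans hvq⟩

lemma hullS_mono {S T : Set X} (h : S ⊆ T) : hullS S ⊆ hullS T := by
  rintro c ⟨p, hp, q, hq, h1, h2⟩
  exact ⟨p, h hp, q, h hq, h1, h2⟩

lemma hullS_subset_Icc {S : Set X} {a b : X} (h : S ⊆ Icc a b) : hullS S ⊆ Icc a b := by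
  rintro c ⟨p, hp, q, hq, h1, h2⟩
  exact ⟨(h hp).1.trans h1, h2.trans (h hq).2⟩

lemma IB_mono' {B C : Set X} (h : B ⊆ C) (hC : C ∈ IB X) : B ∈ IB X := by
  rcases hC with hC | ⟨a, b, hab⟩
  · left; subst hC; exact subset_empty_iff.mp h
  · right; exact ⟨a, b, h.trans hab⟩

lemma IB_iff [Nonempty X] {B : Set X} : B ∈ IB X ↔ ∃ a b : X, B ⊆ Icc a b := by
  constructor
  · rintro (h | h)
    · obtain ⟨x⟩ := ‹Nonempty X›
      exact ⟨x, x, by simp [h]⟩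
    · exact h
  · intro h; exact Or.inr h

lemma IB_union {B C : Set X} (hB : B ∈ IB X) (hC : C ∈ IB X) : B ∪ C ∈ IB X := by
  rcases hB with hB | ⟨a, b, hab⟩
  · subst hB; simpa using hC
  rcases hC with hC | ⟨c, d, hcd⟩
  · subst hC; right; exact ⟨a, b, by simpa using hab⟩
  · right
    refine ⟨min a c, max b d, ?_⟩
    rintro x (hx | hx)
    · exact ⟨(min_le_left a c).trans (hab hx).1, (hab hx).2.trans (le_max_left b d)⟩
    · exact ⟨(min_le_right a c).trans (hcd hx).1, (hcd hx).2.trans (le_max_right b d)⟩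

/-- If `D` is convex, each `C z` (for `z ∈ D`) is convex and contains `z`, and the hull of
`⋃ z ∈ D, C z` meets `Icc a b`, then some `C z` meets `Icc a b`. -/
lemma hullS_inter_Icc_of_convex_family [LinearOrder X] {D : Set X} (hD : IsConvexSet D)
    {C : X → Set X} (hC : ∀ z ∈ D, IsConvexSet (C z)) (hz : ∀ z ∈ D, z ∈ C z) {a b : X}
    (h : (hullS (⋃ z ∈ D, C z) ∩ Icc a b).Nonempty) :
    ∃ z ∈ D, (C z ∩ Icc a b).Nonempty := by
  obtain ⟨c, ⟨p, hp, q, hq, hpc, hcq⟩, hc⟩ := h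
  simp only [mem_iUnion, exists_prop] at hp hq
  obtain ⟨z1, hz1, hpz1⟩ := hp
  obtain ⟨z2, hz2, hqz2⟩ := hq
  rcases le_or_gt a p with hap | hpa
  · exact ⟨z1, hz1, p, hpz1, hap, hpc.trans hc.2⟩
  rcases le_or_gt q b with hqb | hbq
  · exact ⟨z2, hz2, q, hqz2, hc.1.trans hcq, hqb⟩
  rcases le_or_gt a z1 with haz1 | hz1a
  · rcases le_or_gt z1 b with hz1b | hbz1
    · exact ⟨z1, hz1, z1, hz z1 hz1, haz1, hz1b⟩
    · exact ⟨z1, hz1, a, hC z1 hz1 p hpz1 z1 (hz z1 hz1) a hpa.le haz1, le_refl a, hc.1.trans hc.2⟩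
  rcases le_or_gt z2 b with hz2b | hbz2
  · rcases le_or_gt a z2 with haz2 | hz2a
    · exact ⟨z2, hz2, z2, hz z2 hz2, haz2, hz2b⟩
    · exact ⟨z2, hz2, b, hC z2 hz2 z2 (hz z2 hz2) q hqz2 b hz2b hbq.le, hc.1.trans hc.2, le_refl b⟩
  · have haD : a ∈ D := hD z1 hz1 z2 hz2 a hz1a.le (hc.1.trans (hc.2.trans hbz2.le))
    exact ⟨a, haD, a, hz a haD, le_refl a, hc.1.trans hc.2⟩

/-- If each `C i` (for `i ∈ I`) is convex and contains the common point `x`, and the hull of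
`⋃ i ∈ I, C i` meets `Icc a b`, then some `C i` meets `Icc a b`. -/
lemma hullS_inter_Icc_of_common_point [LinearOrder X] {I : Set X} {C : X → Set X} {x : X}
    (hC : ∀ i ∈ I, IsConvexSet (C i)) (hx : ∀ i ∈ I, x ∈ C i) {a b : X}
    (h : (hullS (⋃ i ∈ I, C i) ∩ Icc a b).Nonempty) :
    ∃ i ∈ I, (C i ∩ Icc a b).Nonempty := by
  obtain ⟨c, ⟨p, hp, q, hq, hpc, hcq⟩, hc⟩ := h
  simp only [mem_iUnion, exists_prop] at hp hq
  obtain ⟨i1, hi1, hpi1⟩ := hp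
  obtain ⟨i2, hi2, hqi2⟩ := hq
  rcases le_or_gt a p with hap | hpa
  · exact ⟨i1, hi1, p, hpi1, hap, hpc.trans hc.2⟩
  rcases le_or_gt q b with hqb | hbq
  · exact ⟨i2, hi2, q, hqi2, hc.1.trans hcq, hqb⟩
  rcases le_or_gt a x with hax | hxa
  · exact ⟨i1, hi1, a, hC i1 hi1 p hpi1 x (hx i1 hi1) a hpa.le hax, le_refl a, hc.1.trans hc.2⟩
  · exact ⟨i2, hi2, a, hC i2 hi2 x (hx i2 hi2) q hqi2 a hxa.le (hc.1.trans (hc.2.trans hbq.le)), le_refl a, hc.1.trans hc.2⟩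

lemma phi_comp_mem [LinearOrder X] [Nonempty X] {φ ψ : X → Set X}
    (hφ : φ ∈ Phi X) (hψ : ψ ∈ Phi X) :
    (fun x => hullS (⋃ z ∈ φ x, ψ z)) ∈ Phi X := by
  obtain ⟨hφ1, hφ2, hφ3⟩ := hφ
  obtain ⟨hψ1, hψ2, hψ3⟩ := hψ
  have key : ∀ a1 b1 : X, ∀ S : Set X, S ⊆ Icc a1 b1 →
      ∃ a2 b2 : X, (⋃ z ∈ S, ψ z) ⊆ Icc a2 b2 := by
    intro a1 b1 S hS
    obtain ⟨a2, b2, h2⟩ := IB_iff.mp (hψ3 a1 b1).1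
    refine ⟨a2, b2, ?_⟩
    refine subset_trans ?_ h2
    exact biUnion_mono hS (fun z _ => subset_rfl)
  refine ⟨?_, ?_, ?_⟩
  · intro x
    obtain ⟨a, b, hab⟩ := (hφ1 x).2
    obtain ⟨a2, b2, h2⟩ := key a b (φ x) hab
    exact ⟨hullS_convex _, a2, b2, hullS_subset_Icc h2⟩
  · intro x
    exact subset_hullS _ (mem_biUnion (hφ2 x) (hψ2 x))
  · intro a b
    constructor
    · obtain ⟨a1, b1, h1⟩ := IB_iff.mp (hφ3 a b).1
      obtain ⟨a2, b2, h2⟩ := key a1 b1 (Icc a1 b1) subset_rfl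
      rw [IB_iff]
      refine ⟨a2, b2, ?_⟩
      refine iUnion₂_subset fun x hx => hullS_subset_Icc ?_
      refine subset_trans ?_ h2
      refine biUnion_mono (fun z hz => h1 (mem_biUnion hx hz)) (fun z _ => subset_rfl)
    · obtain ⟨a3, b3, h3⟩ := IB_iff.mp (hψ3 a b).2
      refine IB_mono' ?_ (hφ3 a3 b3).2
      intro x hx
      obtain ⟨z, hzφ, hzne⟩ := hullS_inter_Icc_of_convex_family (hφ1 x).1
        (fun z _ => (hψ1 z).1) (fun z _ => hψ2 z) hx
      exact ⟨z, hzφ, h3 hzne⟩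

lemma phi_inv_mem [LinearOrder X] [Nonempty X] {φ : X → Set X} (hφ : φ ∈ Phi X) :
    (fun x => hullS (⋃ y ∈ {y : X | x ∈ φ y}, φ y)) ∈ Phi X := by
  obtain ⟨hφ1, hφ2, hφ3⟩ := hφ
  have hP : ∀ a b : X, ∀ x ∈ Icc a b, {y : X | x ∈ φ y} ⊆ {y : X | (φ y ∩ Icc a b).Nonempty} :=
    fun a b x hx y hy => ⟨x, hy, hx⟩
  have key : ∀ a b : X, ∃ a2 b2 : X, ∀ x ∈ Icc a b, (⋃ y ∈ {y : X | x ∈ φ y}, φ y) ⊆ Icc a2 b2 := by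
    intro a b
    obtain ⟨a1, b1, h1⟩ := IB_iff.mp (hφ3 a b).2
    obtain ⟨a2, b2, h2⟩ := IB_iff.mp (hφ3 a1 b1).1
    refine ⟨a2, b2, fun x hx => subset_trans ?_ h2⟩
    exact biUnion_mono (fun y hy => h1 (hP a b x hx hy)) (fun y _ => subset_rfl)
  refine ⟨?_, ?_, ?_⟩
  · intro x
    obtain ⟨a2, b2, h2⟩ := key x x
    exact ⟨hullS_convex _, a2, b2, hullS_subset_Icc (h2 x ⟨le_refl x, le_refl x⟩)⟩
  · intro x
    exact subset_hullS _ (mem_biUnion (hφ2 x) (hφ2 x))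
  · intro a b
    obtain ⟨a1, b1, h1⟩ := IB_iff.mp (hφ3 a b).2
    constructor
    · obtain ⟨a2, b2, h2⟩ := key a b
      rw [IB_iff]
      exact ⟨a2, b2, iUnion₂_subset fun x hx => hullS_subset_Icc (h2 x hx)⟩
    · refine IB_mono' ?_ (IB_union (hφ3 a1 b1).1 (hφ3 a b).2)
      intro x hx
      obtain ⟨y, hyP, hyne⟩ := hullS_inter_Icc_of_common_point
        (fun y _ => (hφ1 y).1) (fun y hy => hy) hx
      rcases hyne with ⟨w, hw1, hw2⟩
      have hyB : y ∈ Icc a1 b1 := h1 ⟨w, hw1, hw2⟩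
      exact Or.inl (mem_biUnion hyB hyP)

lemma Icc_isConvexSet [LinearOrder X] (a b : X) : IsConvexSet (Icc a b) :=
  fun u hu v hv c huc hcv => ⟨hu.1.trans huc, hcv.trans hv.2⟩

open Classical in
/-- The map sending points of `Icc a b` to `Icc a b` and other points to singletons. -/
def phiIcc [LinearOrder X] (a b : X) (y : X) : Set X :=
  if y ∈ Icc a b then Icc a b else {y}

lemma phi_icc_mem [LinearOrder X] (a b : X) : phiIcc a b ∈ Phi X := by
  have hval : ∀ y : X, phiIcc a b y ⊆ Icc a b ∪ {y} := by
    intro y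
    unfold phiIcc
    split <;> intro w hw
    · exact Or.inl hw
    · exact Or.inr hw
  refine ⟨?_, ?_, ?_⟩
  · intro y
    unfold phiIcc
    by_cases hy : y ∈ Icc a b
    · rw [if_pos hy]; exact ⟨Icc_isConvexSet a b, a, b, subset_rfl⟩
    · rw [if_neg hy]
      refine ⟨?_, y, y, by simp⟩
      rintro u rfl v rfl c huc hcv
      exact le_antisymm hcv huc
  · intro y
    unfold phiIcc
    by_cases hy : y ∈ Icc a b
    · rw [if_pos hy]; exact hy
    · rw [if_neg hy]; exact rfl
  · intro c d
    constructor
    · right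
      refine ⟨min a c, max b d, ?_⟩
      refine iUnion₂_subset fun y hy => (hval y).trans ?_
      rintro w (hw | rfl)
      · exact ⟨(min_le_left a c).trans hw.1, hw.2.trans (le_max_left b d)⟩
      · exact ⟨(min_le_right a c).trans hy.1, hy.2.trans (le_max_right b d)⟩
    · right
      refine ⟨min a c, max b d, ?_⟩
      rintro y ⟨w, hw1, hw2⟩
      by_cases hy : y ∈ Icc a b
      · exact ⟨(min_le_left a c).trans hy.1, hy.2.trans (le_max_left b d)⟩
      · rw [phiIcc, if_neg hy] at hw1
        cases hw1
        exact ⟨(min_le_right a c).trans hw2.1, hw2.2.trans (le_max_right b d)⟩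

end Aux

/-- Example 2: `{E_φ : φ ∈ Φ}` is a base of a coarse structure `𝓔*` on `(X, ≤)` whose balls
are convex and whose bounded sets are exactly the members of the interval bornology. -/
theorem largest_locally_convex_coarse_structure (X : Type*) [LinearOrder X] [Nonempty X] :
    let ES : Set (Set (X × X)) := {E | (∀ x : X, (x, x) ∈ E) ∧ ∃ φ ∈ Phi X, E ⊆ EPhi φ}
    IsCoarse ES ∧
    (∀ φ ∈ Phi X, EPhi φ ∈ ES) ∧
    (∀ E ∈ ES, ∃ φ ∈ Phi X, E ⊆ EPhi φ) ∧
    (∀ φ ∈ Phi X, ∀ x : X, Ball (EPhi φ) x = φ x ∧ IsConvexSet (φ x)) ∧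
    (∀ B : Set X, IsBoundedIn ES B ↔ B ∈ IB X) := by
  intro ES
  refine ⟨⟨fun E hE => hE.1, ?_, ?_, ?_⟩, ?_, fun E hE => hE.2, ?_, ?_⟩
  · -- composition
    rintro E ⟨hEd, φ, hφ, hEφ⟩ F ⟨hFd, ψ, hψ, hFψ⟩
    refine ⟨fun x => ⟨x, hEd x, hFd x⟩,
      fun x => hullS (⋃ z ∈ φ x, ψ z), phi_comp_mem hφ hψ, ?_⟩
    rintro ⟨x, y⟩ ⟨z, hxz, hzy⟩
    have h1 : z ∈ φ x := hEφ hxz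
    have h2 : y ∈ ψ z := hFψ hzy
    exact subset_hullS _ (mem_biUnion h1 h2)
  · -- inverse
    rintro E ⟨hEd, φ, hφ, hEφ⟩
    refine ⟨fun x => hEd x,
      fun x => hullS (⋃ y ∈ {y : X | x ∈ φ y}, φ y), phi_inv_mem hφ, ?_⟩
    rintro ⟨x, y⟩ hxy
    have h1 : x ∈ φ y := hEφ hxy
    exact subset_hullS _ (mem_biUnion (show y ∈ {y : X | x ∈ φ y} from h1) (hφ.2.1 y))
  · -- subsets containing the diagonal
    rintro E ⟨hEd, φ, hφ, hEφ⟩ E' hE'd hsub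
    exact ⟨hE'd, φ, hφ, hsub.trans hEφ⟩
  · -- E_φ ∈ ES
    intro φ hφ
    exact ⟨fun x => hφ.2.1 x, φ, hφ, subset_rfl⟩
  · -- balls are the values of φ, and are convex
    intro φ hφ x
    exact ⟨rfl, (hφ.1 x).1⟩
  · -- bounded sets are exactly the interval bornology
    intro B
    constructor
    · rintro (rfl | ⟨E, ⟨hEd, φ, hφ, hEφ⟩, x, hBx⟩)
      · exact Or.inl rfl
      · obtain ⟨a, b, hab⟩ := (hφ.1 x).2
        exact Or.inr ⟨a, b, fun y hy => hab (hEφ (hBx hy))⟩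
    · rintro (rfl | ⟨a, b, hab⟩)
      · exact Or.inl rfl
      rcases B.eq_empty_or_nonempty with rfl | ⟨x, hx⟩
      · exact Or.inl rfl
      right
      refine ⟨EPhi (phiIcc a b),
        ⟨fun y => (phi_icc_mem a b).2.1 y, phiIcc a b, phi_icc_mem a b, subset_rfl⟩, x, ?_⟩
      intro y hy
      show y ∈ phiIcc a b x
      rw [phiIcc, if_pos (hab hx)]
      exact hab hy
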